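/- arXiv:1406.6528 — 8 statements merged into one kernel-verified Lean document; each statement's English description precedes it below -/
import Mathlib

section
/- Let G : G₁ → G₀ be a crossed module whose boundary map d is surjective (i.e. G is simply connected). Then the displacement subgroup D_{G₀}(G₁) equals the commutator subgroup [G₁, G₁] of the group G₁. -/
open scoped commutatorElement

/-- A crossed module `d : G₁ → G₀` with action `act : G₀ → Aut(G₁)`. -/
structure XMod (G₁ G₀ : Type*) [Group G₁] [Group G₀] where
  d : G₁ →* G₀
  act : G₀ →* MulAut G₁
  cm1 : ∀ (g₀ : G₀) (g₁ : G₁), d (act g₀ g₁) = g₀ * d g₁ * g₀⁻¹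
  cm2 : ∀ (g₁ g₁' : G₁), act (d g₁) g₁' = g₁ * g₁' * g₁⁻¹

/-- The commutator `⁅x, y⁆` lies in the commutator subgroup. -/
lemma mem_commutator_of {G : Type*} [Group G] (x y : G) : ⁅x, y⁆ ∈ commutator G := by
  rw [commutator_def]
  exact Subgroup.commutator_mem_commutator (Subgroup.mem_top x) (Subgroup.mem_top y)

namespace XMod

variable {G₁ G₀ : Type*} [Group G₁] [Group G₀] (X : XMod G₁ G₀)

lemma act_act (a b : G₀) (x : G₁) : X.act a (X.act b x) = X.act (a * b) x := by
  rw [map_mul]; rfl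

lemma act_one (x : G₁) : X.act 1 x = x := by rw [map_one]; rfl

/-- The fixed-point subgroup `G₁^{G₀}`. -/
def fix : Subgroup G₁ where
  carrier := {g₁ | ∀ g₀ : G₀, X.act g₀ g₁ = g₁}
  one_mem' := fun g₀ => map_one (X.act g₀)
  mul_mem' := fun {a b} ha hb g₀ => by rw [map_mul, ha g₀, hb g₀]
  inv_mem' := fun {a} ha g₀ => by rw [map_inv, ha g₀]

lemma mem_fix {g₁ : G₁} : g₁ ∈ X.fix ↔ ∀ g₀ : G₀, X.act g₀ g₁ = g₁ := Iff.rfl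

/-- The stabilizer `St_{G₀}(G₁)`. -/
def stab : Subgroup G₀ where
  carrier := {g₀ | ∀ g₁ : G₁, X.act g₀ g₁ = g₁}
  one_mem' := fun g₁ => X.act_one g₁
  mul_mem' := fun {a b} ha hb g₁ => by rw [← X.act_act, hb g₁, ha g₁]
  inv_mem' := fun {a} ha g₁ => by
    have h := X.act_act a⁻¹ a g₁
    rw [ha g₁] at h
    simpa [X.act_one] using h

lemma mem_stab {g₀ : G₀} : g₀ ∈ X.stab ↔ ∀ g₁ : G₁, X.act g₀ g₁ = g₁ := Iff.rfl

/-- `St_{G₀}(G₁) ∩ Z(G₀)`. -/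
def zstab : Subgroup G₀ := X.stab ⊓ Subgroup.center G₀

lemma fix_le_center : X.fix ≤ Subgroup.center G₁ := fun h hh =>
  Subgroup.mem_center_iff.mpr fun g => by
    have h1 := X.cm2 g h
    rw [hh (X.d g)] at h1
    exact mul_inv_eq_iff_eq_mul.mp h1.symm

instance fix_normal : (X.fix).Normal := ⟨fun n hn g => by
  rw [Subgroup.mem_center_iff.mp (X.fix_le_center hn) g]
  simpa using hn⟩

instance zstab_normal : (X.zstab).Normal := ⟨fun n hn g => by
  rw [Subgroup.mem_center_iff.mp (Subgroup.mem_inf.mp hn).2 g]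
  simpa using hn⟩

/-- The displacement subgroup `D_{G₀}(G₁)`. -/
def disp : Subgroup G₁ :=
  Subgroup.closure {x | ∃ (g₀ : G₀) (g₁ : G₁), x = X.act g₀ g₁ * g₁⁻¹}

lemma disp_gen_mem (g₀ : G₀) (g₁ : G₁) : X.act g₀ g₁ * g₁⁻¹ ∈ X.disp :=
  Subgroup.subset_closure ⟨g₀, g₁, rfl⟩

lemma d_fix_mem {g₁ : G₁} (h : g₁ ∈ X.fix) : X.d g₁ ∈ X.zstab := by
  refine Subgroup.mem_inf.mpr ⟨fun x => ?_, Subgroup.mem_center_iff.mpr fun g₀ => ?_⟩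
  · rw [X.cm2, ← Subgroup.mem_center_iff.mp (X.fix_le_center h) x]
    simp
  · have h1 := X.cm1 g₀ g₁
    rw [h g₀] at h1
    exact mul_inv_eq_iff_eq_mul.mp h1.symm

lemma d_disp_mem {x : G₁} (h : x ∈ X.disp) : X.d x ∈ commutator G₀ := by
  induction h using Subgroup.closure_induction with
  | mem y hy =>
      obtain ⟨g₀, g₁, rfl⟩ := hy
      have h2 : X.d (X.act g₀ g₁ * g₁⁻¹) = ⁅g₀, X.d g₁⁆ := by
        rw [map_mul, map_inv, X.cm1, commutatorElement_def]
      rw [h2]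
      exact mem_commutator_of g₀ (X.d g₁)
  | one => simpa using (commutator G₀).one_mem
  | mul a b _ _ ha hb => rw [map_mul]; exact mul_mem ha hb
  | inv a _ ha => rw [map_inv]; exact inv_mem ha

/-- The boundary map induced on central quotients. -/
def dbar : G₁ ⧸ X.fix →* G₀ ⧸ X.zstab :=
  QuotientGroup.map X.fix X.zstab X.d (fun _ h => X.d_fix_mem h)

/-- The boundary map restricted to the displacement/commutator subgroups. -/
def dres : X.disp →* commutator G₀ :=
  (X.d.domRestrict X.disp).codRestrict (commutator G₀) fun x => X.d_disp_mem x.2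

variable {H₁ H₀ : Type*} [Group H₁] [Group H₀]

/-- Isoclinism of crossed modules. -/
def Isoclinic (X : XMod G₁ G₀) (Y : XMod H₁ H₀) : Prop :=
  ∃ (η₁ : (G₁ ⧸ X.fix) ≃* (H₁ ⧸ Y.fix))
    (η₀ : (G₀ ⧸ X.zstab) ≃* (H₀ ⧸ Y.zstab))
    (ξ₁ : X.disp ≃* Y.disp)
    (ξ₀ : commutator G₀ ≃* commutator H₀),
    (∀ q : G₁ ⧸ X.fix, Y.dbar (η₁ q) = η₀ (X.dbar q)) ∧
    (∀ x : X.disp, Y.dres (ξ₁ x) = ξ₀ (X.dres x)) ∧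
    (∀ (g₁ : G₁) (g₀ : G₀) (h₁ : H₁) (h₀ : H₀),
       η₁ (QuotientGroup.mk g₁) = QuotientGroup.mk h₁ →
       η₀ (QuotientGroup.mk g₀) = QuotientGroup.mk h₀ →
       (ξ₁ ⟨X.act g₀ g₁ * g₁⁻¹, X.disp_gen_mem g₀ g₁⟩ : H₁) = Y.act h₀ h₁ * h₁⁻¹) ∧
    (∀ (g₀ g₀' : G₀) (h₀ h₀' : H₀),
       η₀ (QuotientGroup.mk g₀) = QuotientGroup.mk h₀ →
       η₀ (QuotientGroup.mk g₀') = QuotientGroup.mk h₀' →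
       (ξ₀ ⟨⁅g₀, g₀'⁆, mem_commutator_of g₀ g₀'⟩ : H₀) = ⁅h₀, h₀'⁆)

end XMod

/-- Isoclinism of groups. -/
def IsoclinicGrp (M N : Type*) [Group M] [Group N] : Prop :=
  ∃ (η : (M ⧸ Subgroup.center M) ≃* (N ⧸ Subgroup.center N))
    (ξ : commutator M ≃* commutator N),
    ∀ (x y : M) (u v : N),
      η (QuotientGroup.mk x) = QuotientGroup.mk u →
      η (QuotientGroup.mk y) = QuotientGroup.mk v →
      (ξ ⟨⁅x, y⁆, mem_commutator_of x y⟩ : N) = ⁅u, v⁆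

/-! The Peiffer identity (CM2) says that displacing `y` by the boundary of `x` gives the
commutator `⁅x, y⁆`. Hence every commutator is a displacement, and when `d` is surjective
every generator of the displacement subgroup is a commutator. -/

namespace XMod

variable {G₁ G₀ : Type*} [Group G₁] [Group G₀] (X : XMod G₁ G₀)

lemma act_d_mul_inv (x y : G₁) : X.act (X.d x) y * y⁻¹ = ⁅x, y⁆ := by
  rw [X.cm2, commutatorElement_def]

lemma commutator_le_disp : commutator G₁ ≤ X.disp := by
  rw [commutator_eq_closure, Subgroup.closure_le]
  rintro _ ⟨x, y, rfl⟩
  rw [← X.act_d_mul_inv]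
  exact X.disp_gen_mem _ _

lemma disp_le_commutator_of_surjective (hd : Function.Surjective X.d) :
    X.disp ≤ commutator G₁ := by
  rw [disp, Subgroup.closure_le]
  rintro _ ⟨g₀, y, rfl⟩
  obtain ⟨x, rfl⟩ := hd g₀
  rw [X.act_d_mul_inv]
  exact mem_commutator_of x y

end XMod

/-- if the boundary map of a crossed module is surjective (the crossed
module is simply connected), then the displacement subgroup `D_{G₀}(G₁)` equals the
commutator subgroup `[G₁, G₁]`. -/
theorem disp_eq_commutator_of_surjective {G₁ G₀ : Type*} [Group G₁] [Group G₀]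
    (X : XMod G₁ G₀) (hd : Function.Surjective X.d) :
    X.disp = commutator G₁ :=
  le_antisymm (X.disp_le_commutator_of_surjective hd) X.commutator_le_disp
end

section
/- Isoclinism of crossed modules is an equivalence relation: every crossed module is isoclinic to itself; if a crossed module G is isoclinic to a crossed module H, then H is isoclinic to G; and if G is isoclinic to H and H is isoclinic to K, then G is isoclinic to K. -/
open scoped commutatorElement

universe u v w

/-
Inverses and composites of the four isomorphisms are again isoclinism data: the commuting squares
invert and compose, and the two compatibility conditions transfer by choosing representatives in the
intermediate crossed module. The identities are isoclinism data because `ᵍ⁰g₁ · g₁⁻¹` and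
`[g₀, g₀']` only depend on the classes of `g₁` modulo `G₁^{G₀}` and of `g₀, g₀'` modulo the central
subgroup `St_{G₀}(G₁) ∩ Z(G₀)`.
-/

section Commutator

variable {G : Type*} [Group G]

lemma commutatorElement_mul_central_left (x y : G) {z : G} (hz : z ∈ Subgroup.center G) :
    ⁅x * z, y⁆ = ⁅x, y⁆ := by
  have hzy : ⁅z, y⁆ = 1 :=
    commutatorElement_eq_one_iff_mul_comm.mpr (Subgroup.mem_center_iff.mp hz y).symm
  rw [commutatorElement_mul_left_eq_conj_mul, hzy, mul_one, mul_inv_cancel, one_mul]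

lemma commutatorElement_mul_central_right (x y : G) {w : G} (hw : w ∈ Subgroup.center G) :
    ⁅x, y * w⁆ = ⁅x, y⁆ := by
  have hxw : ⁅x, w⁆ = 1 := commutatorElement_eq_one_iff_mul_comm.mpr (Subgroup.mem_center_iff.mp hw x)
  rw [commutatorElement_mul_right_eq_mul_conj, hxw, mul_one, mul_inv_cancel_right]

lemma commutatorElement_eq_of_mk_eq {N : Subgroup G} (hN : N ≤ Subgroup.center G) {x y u v : G}
    (hxu : (x : G ⧸ N) = u) (hyv : (y : G ⧸ N) = v) : ⁅x, y⁆ = ⁅u, v⁆ := by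
  obtain ⟨z, hz, rfl⟩ : ∃ z ∈ N, u = x * z := ⟨x⁻¹ * u, QuotientGroup.eq.mp hxu, by group⟩
  obtain ⟨w, hw, rfl⟩ : ∃ w ∈ N, v = y * w := ⟨y⁻¹ * v, QuotientGroup.eq.mp hyv, by group⟩
  rw [commutatorElement_mul_central_left _ _ (hN hz), commutatorElement_mul_central_right _ _ (hN hw)]

end Commutator

lemma MulEquiv.coe_symm_mk_eq_of_coe_apply_mk_eq {G H : Type*} [Group G] [Group H]
    {S : Subgroup G} {T : Subgroup H} (e : S ≃* T) {a : G} {b : H} (ha : a ∈ S) (hb : b ∈ T)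
    (h : (e ⟨a, ha⟩ : H) = b) : (e.symm ⟨b, hb⟩ : G) = a :=
  congrArg Subtype.val (e.symm_apply_eq.mpr (Subtype.ext h.symm) : e.symm ⟨b, hb⟩ = ⟨a, ha⟩)

namespace XMod

variable {G₁ G₀ : Type*} [Group G₁] [Group G₀] (X : XMod G₁ G₀)

lemma zstab_le_center : X.zstab ≤ Subgroup.center G₀ := inf_le_right

lemma act_mul_inv_eq_of_mk_eq {g₁ h₁ : G₁} {g₀ h₀ : G₀} (h1 : (g₁ : G₁ ⧸ X.fix) = h₁)
    (h0 : (g₀ : G₀ ⧸ X.zstab) = h₀) : X.act g₀ g₁ * g₁⁻¹ = X.act h₀ h₁ * h₁⁻¹ := by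
  obtain ⟨z, hz, rfl⟩ : ∃ z ∈ X.fix, h₁ = g₁ * z := ⟨g₁⁻¹ * h₁, QuotientGroup.eq.mp h1, by group⟩
  obtain ⟨w, hw, rfl⟩ : ∃ w ∈ X.zstab, h₀ = g₀ * w := ⟨g₀⁻¹ * h₀, QuotientGroup.eq.mp h0, by group⟩
  rw [← X.act_act, X.mem_stab.mp (Subgroup.mem_inf.mp hw).1, map_mul, X.mem_fix.mp hz]
  group

variable {H₁ H₀ K₁ K₀ : Type*} [Group H₁] [Group H₀] [Group K₁] [Group K₀]
  {Y : XMod H₁ H₀} {Z : XMod K₁ K₀}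

@[refl]
theorem Isoclinic.refl : X.Isoclinic X :=
  ⟨MulEquiv.refl _, MulEquiv.refl _, MulEquiv.refl _, MulEquiv.refl _, fun _ => rfl, fun _ => rfl,
    fun _ _ _ _ h1 h0 => X.act_mul_inv_eq_of_mk_eq h1 h0,
    fun _ _ _ _ h0 h0' => commutatorElement_eq_of_mk_eq X.zstab_le_center h0 h0'⟩

variable {X}

@[symm]
theorem Isoclinic.symm (h : X.Isoclinic Y) : Y.Isoclinic X := by
  obtain ⟨η₁, η₀, ξ₁, ξ₀, hdbar, hdres, hact, hcomm⟩ := h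
  refine ⟨η₁.symm, η₀.symm, ξ₁.symm, ξ₀.symm, fun q => ?_, fun x => ?_, ?_, ?_⟩
  · rw [η₀.eq_symm_apply, ← hdbar, η₁.apply_symm_apply]
  · rw [ξ₀.eq_symm_apply, ← hdres, ξ₁.apply_symm_apply]
  · intro h₁ h₀ g₁ g₀ h1 h0
    exact ξ₁.coe_symm_mk_eq_of_coe_apply_mk_eq _ _
      (hact g₁ g₀ h₁ h₀ (η₁.symm_apply_eq.mp h1).symm (η₀.symm_apply_eq.mp h0).symm)
  · intro h₀ h₀' g₀ g₀' h0 h0'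
    exact ξ₀.coe_symm_mk_eq_of_coe_apply_mk_eq _ _
      (hcomm g₀ g₀' h₀ h₀' (η₀.symm_apply_eq.mp h0).symm (η₀.symm_apply_eq.mp h0').symm)

@[trans]
theorem Isoclinic.trans (hXY : X.Isoclinic Y) (hYZ : Y.Isoclinic Z) : X.Isoclinic Z := by
  obtain ⟨η₁, η₀, ξ₁, ξ₀, hdbar, hdres, hact, hcomm⟩ := hXY
  obtain ⟨η₁', η₀', ξ₁', ξ₀', hdbar', hdres', hact', hcomm'⟩ := hYZ
  refine ⟨η₁.trans η₁', η₀.trans η₀', ξ₁.trans ξ₁', ξ₀.trans ξ₀', fun q => ?_, fun x => ?_, ?_, ?_⟩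
  · simp only [MulEquiv.trans_apply, hdbar', hdbar]
  · simp only [MulEquiv.trans_apply, hdres', hdres]
  · intro g₁ g₀ k₁ k₀ h1 h0
    obtain ⟨h₁, e1⟩ := QuotientGroup.mk_surjective (η₁ g₁)
    obtain ⟨h₀, e0⟩ := QuotientGroup.mk_surjective (η₀ g₀)
    have hξ₁ : ξ₁ ⟨X.act g₀ g₁ * g₁⁻¹, X.disp_gen_mem g₀ g₁⟩ =
        ⟨Y.act h₀ h₁ * h₁⁻¹, Y.disp_gen_mem h₀ h₁⟩ :=
      Subtype.ext (hact g₁ g₀ h₁ h₀ e1.symm e0.symm)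
    rw [MulEquiv.trans_apply, hξ₁]
    exact hact' h₁ h₀ k₁ k₀ (e1 ▸ h1) (e0 ▸ h0)
  · intro g₀ g₀' k₀ k₀' h0 h0'
    obtain ⟨h₀, e0⟩ := QuotientGroup.mk_surjective (η₀ g₀)
    obtain ⟨h₀', e0'⟩ := QuotientGroup.mk_surjective (η₀ g₀')
    have hξ₀ : ξ₀ ⟨⁅g₀, g₀'⁆, mem_commutator_of g₀ g₀'⟩ = ⟨⁅h₀, h₀'⁆, mem_commutator_of h₀ h₀'⟩ :=
      Subtype.ext (hcomm g₀ g₀' h₀ h₀' e0.symm e0'.symm)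
    rw [MulEquiv.trans_apply, hξ₀]
    exact hcomm' h₀ h₀' k₀ k₀' (e0 ▸ h0) (e0' ▸ h0')

end XMod

/-- isoclinism of crossed modules is an equivalence relation. -/
theorem isoclinic_equivalence :
    (∀ (G₁ G₀ : Type u) [Group G₁] [Group G₀] (X : XMod G₁ G₀), X.Isoclinic X) ∧
    (∀ (G₁ G₀ : Type u) [Group G₁] [Group G₀] (H₁ H₀ : Type v) [Group H₁] [Group H₀]
      (X : XMod G₁ G₀) (Y : XMod H₁ H₀), X.Isoclinic Y → Y.Isoclinic X) ∧
    (∀ (G₁ G₀ : Type u) [Group G₁] [Group G₀] (H₁ H₀ : Type v) [Group H₁] [Group H₀]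
      (K₁ K₀ : Type w) [Group K₁] [Group K₀]
      (X : XMod G₁ G₀) (Y : XMod H₁ H₀) (Z : XMod K₁ K₀),
      X.Isoclinic Y → Y.Isoclinic Z → X.Isoclinic Z) :=
  ⟨fun _ _ _ _ X => XMod.Isoclinic.refl X, fun _ _ _ _ _ _ _ _ _ _ h => h.symm,
    fun _ _ _ _ _ _ _ _ _ _ _ _ _ _ _ hXY hYZ => hXY.trans hYZ⟩
end

section
/- For every natural number n ≥ 3, the dihedral group of order 2ⁿ (the dihedral group on 2^{n-1} vertices) and the generalized quaternion group of order 2ⁿ (the dicyclic/quaternion group of parameter 2^{n-2}) are isoclinic groups. -/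
/-!
The bijection `r i ↦ a i`, `sr i ↦ xa i` from `DihedralGroup (2 * k)` to `QuaternionGroup k` is
multiplicative except on pairs of reflections, where `xa i * xa j = a (k + j - i)` differs from the
image `a (j - i)` of `sr i * sr j` by the central element `a k`. Hence it is a homomorphism modulo
the centres and it preserves commutators, which makes it preserve the centres and induce the
isomorphism of central quotients; and it is multiplicative on the rotations, which contain the
commutator subgroup, so it restricts to an isomorphism of commutator subgroups.
-/

open scoped commutatorElement

open Subgroup

theorem mem_center_iff_forall_commutatorElement_eq_one {G : Type*} [Group G] {z : G} :
    z ∈ center G ↔ ∀ g : G, ⁅g, z⁆ = 1 := by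
  simp_rw [Subgroup.mem_center_iff, commutatorElement_eq_one_iff_mul_comm]

theorem commutatorElement_eq_of_mk_eq_mk {G : Type*} [Group G] {x y u v : G}
    (hx : (x : G ⧸ center G) = u) (hy : (y : G ⧸ center G) = v) : ⁅x, y⁆ = ⁅u, v⁆ := by
  obtain ⟨z, hz, rfl⟩ : ∃ z ∈ center G, u = x * z := ⟨x⁻¹ * u, QuotientGroup.eq.mp hx, by group⟩
  obtain ⟨w, hw, rfl⟩ : ∃ w ∈ center G, v = y * w := ⟨y⁻¹ * v, QuotientGroup.eq.mp hy, by group⟩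
  rw [mem_center_iff_forall_commutatorElement_eq_one] at hz hw
  have hz' (g : G) : ⁅z, g⁆ = 1 := by rw [← commutatorElement_inv, hz, inv_one]
  rw [commutatorElement_mul_left_eq_conj_mul, hz', commutatorElement_mul_right_eq_mul_conj, hw]
  group

namespace Equiv

variable {M N : Type*} [Group M] [Group N] (e : M ≃ N)

theorem map_one_of_map_commutatorElement (h_comm : ∀ x y, e ⁅x, y⁆ = ⁅e x, e y⁆) :
    e 1 = 1 := by
  rw [← commutatorElement_self 1, h_comm, commutatorElement_self]

theorem mem_center_iff_of_map_commutatorElement (h_comm : ∀ x y, e ⁅x, y⁆ = ⁅e x, e y⁆)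
    (x : M) : e x ∈ center N ↔ x ∈ center M := by
  simp only [mem_center_iff_forall_commutatorElement_eq_one, ← e.forall_congr_right]
  simp_rw [← h_comm, ← e.map_one_of_map_commutatorElement h_comm, e.apply_eq_iff_eq]

noncomputable def centralQuotientMulEquiv
    (h_mul : ∀ x y, (e (x * y) : N ⧸ center N) = e x * e y)
    (h_comm : ∀ x y, e ⁅x, y⁆ = ⁅e x, e y⁆) : M ⧸ center M ≃* N ⧸ center N :=
  QuotientGroup.liftEquiv _ (φ := MonoidHom.mk' (fun x => (e x : N ⧸ center N)) h_mul)
    (fun q => QuotientGroup.induction_on q fun u => ⟨e.symm u, by simp⟩)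
    (by
      ext x
      simp [QuotientGroup.eq_one_iff, e.mem_center_iff_of_map_commutatorElement h_comm])

theorem centralQuotientMulEquiv_mk (h_mul : ∀ x y, (e (x * y) : N ⧸ center N) = e x * e y)
    (h_comm : ∀ x y, e ⁅x, y⁆ = ⁅e x, e y⁆) (x : M) :
    e.centralQuotientMulEquiv h_mul h_comm x = e x := rfl

theorem mem_commutator_iff_of_map_commutatorElement
    (h_comm : ∀ x y, e ⁅x, y⁆ = ⁅e x, e y⁆)
    (h_mul_comm : ∀ c ∈ commutator M, ∀ d ∈ commutator M, e (c * d) = e c * e d) (c : M) :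
    e c ∈ commutator N ↔ c ∈ commutator M := by
  let ψ : commutator M →* N :=
    { toFun c := e c
      map_one' := e.map_one_of_map_commutatorElement h_comm
      map_mul' c d := h_mul_comm c c.2 d d.2 }
  constructor
  · intro hc
    have h_le : commutator N ≤ ψ.range := by
      rw [commutator_eq_closure, Subgroup.closure_le]
      rintro _ ⟨u, v, rfl⟩
      refine ⟨⟨_, mem_commutator_of (e.symm u) (e.symm v)⟩, ?_⟩
      simp [ψ, h_comm]
    obtain ⟨d, hd⟩ := h_le hc
    exact e.injective hd ▸ d.2
  · intro hc
    rw [commutator_eq_closure] at hc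
    induction hc using Subgroup.closure_induction with
    | mem _ h =>
      obtain ⟨x, y, rfl⟩ := h
      exact h_comm x y ▸ mem_commutator_of (e x) (e y)
    | one => exact ψ.map_one ▸ one_mem _
    | mul g h hg hh ihg ihh =>
      rw [← commutator_eq_closure] at hg hh
      exact h_mul_comm g hg h hh ▸ mul_mem ihg ihh
    | inv g hg ih =>
      rw [← commutator_eq_closure] at hg
      exact ψ.map_inv ⟨g, hg⟩ ▸ inv_mem ih

def commutatorMulEquiv (h_comm : ∀ x y, e ⁅x, y⁆ = ⁅e x, e y⁆)
    (h_mul_comm : ∀ c ∈ commutator M, ∀ d ∈ commutator M, e (c * d) = e c * e d) :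
    commutator M ≃* commutator N :=
  { e.subtypeEquiv fun c =>
      (e.mem_commutator_iff_of_map_commutatorElement h_comm h_mul_comm c).symm with
    map_mul' c d := Subtype.ext (h_mul_comm c c.2 d d.2) }

end Equiv

theorem IsoclinicGrp.of_equiv {M N : Type*} [Group M] [Group N] (e : M ≃ N)
    (h_mul : ∀ x y, (e (x * y) : N ⧸ center N) = e x * e y)
    (h_comm : ∀ x y, e ⁅x, y⁆ = ⁅e x, e y⁆)
    (h_mul_comm : ∀ c ∈ commutator M, ∀ d ∈ commutator M, e (c * d) = e c * e d) :
    IsoclinicGrp M N := by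
  refine ⟨e.centralQuotientMulEquiv h_mul h_comm, e.commutatorMulEquiv h_comm h_mul_comm, ?_⟩
  intro x y u v hx hy
  rw [Equiv.centralQuotientMulEquiv_mk] at hx hy
  exact (h_comm x y).trans (commutatorElement_eq_of_mk_eq_mk hx hy)

theorem ZMod.two_mul_natCast_self (n : ℕ) : (2 * n : ZMod (2 * n)) = 0 := by
  exact_mod_cast ZMod.natCast_self (2 * n)

namespace QuaternionGroup

variable {n : ℕ}

theorem inv_a (i : ZMod (2 * n)) : (a i)⁻¹ = a (-i) := rfl

theorem inv_xa (i : ZMod (2 * n)) : (xa i)⁻¹ = xa ((n : ZMod (2 * n)) + i) := rfl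

theorem a_natCast_mem_center : a (n : ZMod (2 * n)) ∈ center (QuaternionGroup n) := by
  rw [Subgroup.mem_center_iff]
  rintro (j | j)
  · simp [add_comm]
  · simp only [xa_mul_a, a_mul_xa, xa.injEq]
    linear_combination ZMod.two_mul_natCast_self n

end QuaternionGroup

namespace DihedralGroup

theorem exists_r_of_mem_commutator {n : ℕ} {g : DihedralGroup n} (hg : g ∈ commutator _) :
    ∃ i, g = r i := by
  rw [commutator_eq_closure] at hg
  induction hg using Subgroup.closure_induction with
  | mem _ h =>
    obtain ⟨x, y, rfl⟩ := h
    rcases x with i | i <;> rcases y with j | j <;>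
      simp only [commutatorElement_def, inv_r, inv_sr, r_mul_r, r_mul_sr, sr_mul_r, sr_mul_sr] <;>
      exact ⟨_, rfl⟩
  | one => exact ⟨0, rfl⟩
  | mul _ _ _ _ hg hh =>
    obtain ⟨i, rfl⟩ := hg
    obtain ⟨j, rfl⟩ := hh
    exact ⟨i + j, r_mul_r i j⟩
  | inv _ _ hg =>
    obtain ⟨i, rfl⟩ := hg
    exact ⟨-i, inv_r i⟩

open QuaternionGroup

def equivQuaternionGroup (k : ℕ) : DihedralGroup (2 * k) ≃ QuaternionGroup k where
  toFun
    | r i => a i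
    | sr i => xa i
  invFun
    | a i => r i
    | xa i => sr i
  left_inv := by rintro (i | i) <;> rfl
  right_inv := by rintro (i | i) <;> rfl

variable {k : ℕ}

@[simp]
theorem equivQuaternionGroup_r (i : ZMod (2 * k)) : equivQuaternionGroup k (r i) = a i := rfl

@[simp]
theorem equivQuaternionGroup_sr (i : ZMod (2 * k)) : equivQuaternionGroup k (sr i) = xa i := rfl

theorem equivQuaternionGroup_mul_mk (x y : DihedralGroup (2 * k)) :
    (equivQuaternionGroup k (x * y) : QuaternionGroup k ⧸ center (QuaternionGroup k)) =
      equivQuaternionGroup k x * equivQuaternionGroup k y := by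
  rw [← QuotientGroup.mk_mul]
  rcases x with i | i <;> rcases y with j | j
  · rfl
  · rfl
  · rfl
  · rw [QuotientGroup.eq, sr_mul_sr, equivQuaternionGroup_r, equivQuaternionGroup_sr,
      equivQuaternionGroup_sr, xa_mul_xa, inv_a, a_mul_a]
    convert a_natCast_mem_center using 2
    ring

theorem equivQuaternionGroup_commutatorElement (x y : DihedralGroup (2 * k)) :
    equivQuaternionGroup k ⁅x, y⁆ =
      ⁅equivQuaternionGroup k x, equivQuaternionGroup k y⁆ := by
  have h2k := ZMod.two_mul_natCast_self k
  rcases x with i | i <;> rcases y with j | j <;>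
    simp only [commutatorElement_def, inv_r, inv_sr, r_mul_r, r_mul_sr, sr_mul_r, sr_mul_sr,
      inv_a, inv_xa, a_mul_a, a_mul_xa, xa_mul_a, xa_mul_xa, equivQuaternionGroup_r,
      equivQuaternionGroup_sr, a.injEq] <;>
    grind

theorem equivQuaternionGroup_mul_of_mem_commutator {c d : DihedralGroup (2 * k)}
    (hc : c ∈ commutator _) (hd : d ∈ commutator _) :
    equivQuaternionGroup k (c * d) = equivQuaternionGroup k c * equivQuaternionGroup k d := by
  obtain ⟨i, rfl⟩ := exists_r_of_mem_commutator hc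
  obtain ⟨j, rfl⟩ := exists_r_of_mem_commutator hd
  rfl

end DihedralGroup

theorem isoclinicGrp_dihedralGroup_quaternionGroup (k : ℕ) :
    IsoclinicGrp (DihedralGroup (2 * k)) (QuaternionGroup k) :=
  .of_equiv (DihedralGroup.equivQuaternionGroup k) DihedralGroup.equivQuaternionGroup_mul_mk
    DihedralGroup.equivQuaternionGroup_commutatorElement
    fun _ hc _ hd => DihedralGroup.equivQuaternionGroup_mul_of_mem_commutator hc hd

/-- for `n ≥ 3`, the dihedral group of order `2ⁿ` and the generalized
quaternion group of order `2ⁿ` are isoclinic. -/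
theorem dihedralGroup_isoclinic_quaternionGroup (n : ℕ) (hn : 3 ≤ n) :
    IsoclinicGrp (DihedralGroup (2 ^ (n - 1))) (QuaternionGroup (2 ^ (n - 2))) := by
  have h : 2 ^ (n - 1) = 2 * 2 ^ (n - 2) := by
    rw [← pow_succ']
    congr 1
    omega
  rw [h]
  exact isoclinicGrp_dihedralGroup_quaternionGroup _
end

section
/- Let M be a group and H a subgroup of M such that H·Z(M) = M, i.e. every element of M is a product of an element of H and an element of the center Z(M). Then H (with its group structure) is isoclinic to M. -/
open scoped commutatorElement

/-!
Every element of `M` is `x * z` with `x ∈ H` and `z` central, so the inclusion `H → M` induces a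
surjection `H → M ⧸ Z(M)` with kernel `H ∩ Z(M) = Z(H)`, and, since central factors do not change
commutators, it maps `[H, H]` onto `[M, M]`. For the two isomorphisms induced by the inclusion the
compatibility condition is the fact that `⁅x, y⁆` depends only on the classes of `x` and `y`
modulo `Z(M)`.
-/

namespace Subgroup

variable {G : Type*} [Group G]

theorem commutatorElement_mul_mul_of_mem_center (x y : G) {z w : G} (hz : z ∈ center G)
    (hw : w ∈ center G) : ⁅x * z, y * w⁆ = ⁅x, y⁆ := by
  have hz' := mem_center_iff.mp hz
  have hw' := mem_center_iff.mp hw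
  calc ⁅x * z, y * w⁆ = x * (z * (y * w)) * z⁻¹ * x⁻¹ * w⁻¹ * y⁻¹ := by group
    _ = x * y * (w * x⁻¹) * w⁻¹ * y⁻¹ := by rw [← hz' (y * w)]; group
    _ = ⁅x, y⁆ := by rw [← hw' x⁻¹]; group

theorem commutatorElement_eq_of_mk_eq {x y u v : G}
    (hxu : (x : G ⧸ center G) = u) (hyv : (y : G ⧸ center G) = v) : ⁅x, y⁆ = ⁅u, v⁆ := by
  obtain ⟨z, hz, rfl⟩ : ∃ z ∈ center G, u = x * z := ⟨x⁻¹ * u, QuotientGroup.eq.mp hxu, by group⟩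
  obtain ⟨w, hw, rfl⟩ : ∃ w ∈ center G, v = y * w := ⟨y⁻¹ * v, QuotientGroup.eq.mp hyv, by group⟩
  exact (commutatorElement_mul_mul_of_mem_center x y hz hw).symm

variable {H : Subgroup G}

theorem mk_comp_subtype_surjective_of_mul_center
    (hH : ∀ g : G, ∃ x ∈ H, ∃ z ∈ center G, g = x * z) :
    Function.Surjective ((QuotientGroup.mk' (center G)).comp H.subtype) := by
  intro q
  obtain ⟨g, rfl⟩ := QuotientGroup.mk'_surjective (center G) q
  obtain ⟨x, hx, z, hz, rfl⟩ := hH g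
  exact ⟨⟨x, hx⟩, QuotientGroup.eq.mpr (by simpa using hz)⟩

theorem ker_mk_comp_subtype_eq_center_of_mul_center
    (hH : ∀ g : G, ∃ x ∈ H, ∃ z ∈ center G, g = x * z) :
    ((QuotientGroup.mk' (center G)).comp H.subtype).ker = center H := by
  ext a
  simp only [MonoidHom.mem_ker, MonoidHom.comp_apply, QuotientGroup.mk'_apply,
    QuotientGroup.eq_one_iff, coe_subtype, mem_center_iff]
  constructor
  · exact fun ha b => Subtype.ext (ha b)
  · intro ha g
    obtain ⟨x, hx, z, hz, rfl⟩ := hH g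
    have hxa : x * a = a * x := congrArg Subtype.val (ha ⟨x, hx⟩)
    rw [mul_assoc, ← mem_center_iff.mp hz, ← mul_assoc, hxa, mul_assoc]

theorem map_subtype_commutator_eq_of_mul_center
    (hH : ∀ g : G, ∃ x ∈ H, ∃ z ∈ center G, g = x * z) :
    (_root_.commutator H).map H.subtype = _root_.commutator G := by
  rw [map_subtype_commutator, _root_.commutator_def]
  refine le_antisymm (commutator_mono le_top le_top) (commutator_le.mpr ?_)
  intro g _ g' _
  obtain ⟨x, hx, z, hz, rfl⟩ := hH g
  obtain ⟨y, hy, w, hw, rfl⟩ := hH g'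
  rw [commutatorElement_mul_mul_of_mem_center x y hz hw]
  exact commutator_mem_commutator hx hy

noncomputable def centerQuotientEquivOfMulCenter
    (hH : ∀ g : G, ∃ x ∈ H, ∃ z ∈ center G, g = x * z) : H ⧸ center H ≃* G ⧸ center G :=
  (QuotientGroup.quotientMulEquivOfEq (ker_mk_comp_subtype_eq_center_of_mul_center hH).symm).trans
    (QuotientGroup.quotientKerEquivOfSurjective _ (mk_comp_subtype_surjective_of_mul_center hH))

@[simp]
theorem centerQuotientEquivOfMulCenter_mk (hH : ∀ g : G, ∃ x ∈ H, ∃ z ∈ center G, g = x * z)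
    (x : H) : centerQuotientEquivOfMulCenter hH x = ((x : G) : G ⧸ center G) :=
  rfl

noncomputable def commutatorEquivOfMulCenter
    (hH : ∀ g : G, ∃ x ∈ H, ∃ z ∈ center G, g = x * z) :
    _root_.commutator H ≃* _root_.commutator G :=
  ((_root_.commutator H).equivMapOfInjective H.subtype H.subtype_injective).trans
    (MulEquiv.subgroupCongr (map_subtype_commutator_eq_of_mul_center hH))

@[simp]
theorem coe_commutatorEquivOfMulCenter (hH : ∀ g : G, ∃ x ∈ H, ∃ z ∈ center G, g = x * z)
    (a : _root_.commutator H) : (commutatorEquivOfMulCenter hH a : G) = ((a : H) : G) :=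
  rfl

end Subgroup

/-- if `H` is a subgroup of `M` with `H · Z(M) = M`, then `H` is
isoclinic to `M`. -/
theorem isoclinicGrp_of_mul_center_eq (M : Type*) [Group M] (H : Subgroup M)
    (h : ∀ m : M, ∃ x ∈ H, ∃ z ∈ Subgroup.center M, m = x * z) :
    IsoclinicGrp H M := by
  refine ⟨Subgroup.centerQuotientEquivOfMulCenter h, Subgroup.commutatorEquivOfMulCenter h,
    fun x y u v hxu hyv => ?_⟩
  rw [Subgroup.centerQuotientEquivOfMulCenter_mk] at hxu hyv
  rw [Subgroup.coe_commutatorEquivOfMulCenter]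
  exact Subgroup.commutatorElement_eq_of_mk_eq hxu hyv
end

section
/- Let G : G₁ → G₀ and H : H₁ → H₀ be isoclinic crossed modules, both aspherical (i.e. both boundary maps are injective). Then the groups G₀ and H₀ are isoclinic. -/
/-! If `d` is injective, a central `z ∈ G₀` acts trivially, since `d (ᶻx) = z d(x) z⁻¹ = d x`;
so `St_{G₀}(G₁) ∩ Z(G₀) = Z(G₀)`, and the base components `(η₀, ξ₀)` of a crossed-module
isoclinism are then literally a group isoclinism of `G₀` and `H₀`. -/

open scoped commutatorElement

namespace XMod

variable {G₁ G₀ H₁ H₀ : Type*} [Group G₁] [Group G₀] [Group H₁] [Group H₀]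

lemma center_le_stab_of_injective (X : XMod G₁ G₀) (hX : Function.Injective X.d) :
    Subgroup.center G₀ ≤ X.stab := fun g hg g₁ =>
  hX <| by rw [X.cm1, ← Subgroup.mem_center_iff.mp hg (X.d g₁), mul_inv_cancel_right]

lemma zstab_eq_center_of_injective (X : XMod G₁ G₀) (hX : Function.Injective X.d) :
    X.zstab = Subgroup.center G₀ :=
  inf_eq_right.mpr (X.center_le_stab_of_injective hX)

theorem Isoclinic.isoclinicGrp_base {X : XMod G₁ G₀} {Y : XMod H₁ H₀} (h : X.Isoclinic Y)
    (hX : X.zstab = Subgroup.center G₀) (hY : Y.zstab = Subgroup.center H₀) :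
    IsoclinicGrp G₀ H₀ := by
  obtain ⟨-, η₀, -, ξ₀, -, -, -, hcomm⟩ := h
  let eX := QuotientGroup.quotientMulEquivOfEq hX.symm
  let eY := QuotientGroup.quotientMulEquivOfEq hY
  exact ⟨(eX.trans η₀).trans eY, ξ₀, fun x y u v hx hy =>
    hcomm x y u v (eY.injective hx) (eY.injective hy)⟩

end XMod

/-- if two aspherical crossed modules are isoclinic, then their base
groups are isoclinic. -/
theorem isoclinicGrp_base_of_aspherical {G₁ G₀ H₁ H₀ : Type*}
    [Group G₁] [Group G₀] [Group H₁] [Group H₀]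
    (X : XMod G₁ G₀) (Y : XMod H₁ H₀) (h : X.Isoclinic Y)
    (hX : Function.Injective X.d) (hY : Function.Injective Y.d) :
    IsoclinicGrp G₀ H₀ :=
  h.isoclinicGrp_base (X.zstab_eq_center_of_injective hX) (Y.zstab_eq_center_of_injective hY)
end

section
/- If M and N are isoclinic groups, then M is nilpotent if and only if N is nilpotent. -/
open scoped commutatorElement

/-! A group is nilpotent exactly when its central quotient is, and an isoclinism contains an
isomorphism of central quotients. -/

theorem Group.isNilpotent_iff_isNilpotent_quotient_center {G : Type*} [Group G] :
    Group.IsNilpotent G ↔ Group.IsNilpotent (G ⧸ Subgroup.center G) :=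
  ⟨fun _ => nilpotent_quotient_of_nilpotent _, of_quotient_center_nilpotent⟩

/-- isoclinic groups are simultaneously nilpotent. -/
theorem isNilpotent_iff_of_isoclinicGrp (M N : Type*) [Group M] [Group N]
    (h : IsoclinicGrp M N) : Group.IsNilpotent M ↔ Group.IsNilpotent N := by
  obtain ⟨η, -, -⟩ := h
  rw [Group.isNilpotent_iff_isNilpotent_quotient_center,
    Group.isNilpotent_iff_isNilpotent_quotient_center (G := N)]
  exact Group.isNilpotent_congr η
end

section
/- If M and N are isoclinic nilpotent groups and both M and N are nontrivial, then M and N have the same nilpotency class. -/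
open scoped commutatorElement

/-! Only the isomorphism of central quotients is needed: for a nontrivial nilpotent group the
class drops by exactly one on passing to `G ⧸ center G`. -/

theorem MulEquiv.nilpotencyClass_eq {G H : Type*} [Group G] [Group H]
    [Group.IsNilpotent G] [Group.IsNilpotent H] (e : G ≃* H) :
    Group.nilpotencyClass G = Group.nilpotencyClass H :=
  le_antisymm (Group.nilpotencyClass_le_of_surjective e.symm.toMonoidHom e.symm.surjective)
    (Group.nilpotencyClass_le_of_surjective e.toMonoidHom e.surjective)

/-- nontrivial isoclinic nilpotent groups have the same nilpotency
class. -/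
theorem nilpotencyClass_eq_of_isoclinicGrp (M N : Type*) [Group M] [Group N]
    [Group.IsNilpotent M] [Group.IsNilpotent N] [Nontrivial M] [Nontrivial N]
    (h : IsoclinicGrp M N) :
    Group.nilpotencyClass M = Group.nilpotencyClass N := by
  obtain ⟨η, -, -⟩ := h
  rw [Group.nilpotencyClass_eq_quotient_center_plus_one (G := M),
    Group.nilpotencyClass_eq_quotient_center_plus_one (G := N), η.nilpotencyClass_eq]
end

section
/- If M and N are isoclinic groups, then M is solvable if and only if N is solvable; moreover, if M and N are both nontrivial and solvable, then M and N have the same derived length. -/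
/-!
Solvability and, for nontrivial groups, derived length depend only on the isomorphism type of
the commutator subgroup `G'`. Indeed `G⁽ⁿ⁺¹⁾ = (G')⁽ⁿ⁾`, so `G⁽ⁿ⁺¹⁾ = ⊥` is a property of `G'`;
`G` is solvable exactly when `G'` is, since `G ⧸ G'` is abelian; and for nontrivial `G` the
term `G⁽⁰⁾ = ⊤` is never trivial.
-/

open scoped commutatorElement

/-- The derived length of a group: the least `n` with `derivedSeries G n = ⊥`. -/
noncomputable def derivedLength (G : Type*) [Group G] : ℕ :=
  sInf {n | derivedSeries G n = ⊥}

namespace Group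

variable {G H : Type*} [Group G] [Group H]

lemma derivedSeries_succ_eq_map_derivedSeries_commutator (n : ℕ) :
    derivedSeries G (n + 1) = (derivedSeries (commutator G) n).map (commutator G).subtype := by
  induction n with
  | zero =>
    rw [derivedSeries_one, derivedSeries_zero, ← MonoidHom.range_eq_map, Subgroup.range_subtype]
  | succ n ih =>
    rw [derivedSeries_succ, ih, derivedSeries_succ, Subgroup.map_commutator]

lemma derivedSeries_succ_eq_bot_iff (n : ℕ) :
    derivedSeries G (n + 1) = ⊥ ↔ derivedSeries (commutator G) n = ⊥ := by
  rw [derivedSeries_succ_eq_map_derivedSeries_commutator,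
    Subgroup.map_eq_bot_iff_of_injective _ (Subgroup.subtype_injective _)]

lemma derivedSeries_eq_bot_iff_of_mulEquiv (e : G ≃* H) (n : ℕ) :
    derivedSeries G n = ⊥ ↔ derivedSeries H n = ⊥ := by
  rw [← map_derivedSeries_eq (f := e.toMonoidHom) e.surjective n,
    Subgroup.map_eq_bot_iff_of_injective _ e.injective]

lemma isSolvable_iff_isSolvable_commutator :
    IsSolvable G ↔ IsSolvable (commutator G) :=
  ⟨fun _ ↦ inferInstance, fun _ ↦
    isSolvable_of_ker_le_range (commutator G).subtype (Abelianization.of (G := G))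
      (by rw [Abelianization.ker_of, Subgroup.range_subtype])⟩

lemma isSolvable_iff_of_commutator_mulEquiv (e : commutator G ≃* commutator H) :
    IsSolvable G ↔ IsSolvable H := by
  rw [isSolvable_iff_isSolvable_commutator, isSolvable_iff_isSolvable_commutator (G := H)]
  exact ⟨fun _ ↦ isSolvable_of_surjective (f := e.toMonoidHom) e.surjective,
    fun _ ↦ isSolvable_of_surjective (f := e.symm.toMonoidHom) e.symm.surjective⟩

lemma derivedSeries_eq_bot_iff_of_commutator_mulEquiv [Nontrivial G] [Nontrivial H]
    (e : commutator G ≃* commutator H) (n : ℕ) :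
    derivedSeries G n = ⊥ ↔ derivedSeries H n = ⊥ := by
  cases n with
  | zero => simp only [derivedSeries_zero, top_ne_bot]
  | succ n =>
    rw [derivedSeries_succ_eq_bot_iff, derivedSeries_succ_eq_bot_iff,
      derivedSeries_eq_bot_iff_of_mulEquiv e]

end Group

lemma derivedLength_eq_of_commutator_mulEquiv {G H : Type*} [Group G] [Group H]
    [Nontrivial G] [Nontrivial H] (e : commutator G ≃* commutator H) :
    derivedLength G = derivedLength H :=
  congrArg sInf (Set.ext (Group.derivedSeries_eq_bot_iff_of_commutator_mulEquiv e))

/-- isoclinic groups are simultaneously solvable, and nontrivial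
solvable isoclinic groups have the same derived length. -/
theorem isSolvable_iff_and_derivedLength_eq_of_isoclinicGrp (M N : Type*)
    [Group M] [Group N] (h : IsoclinicGrp M N) :
    (IsSolvable M ↔ IsSolvable N) ∧
      (Nontrivial M → Nontrivial N → IsSolvable M → IsSolvable N →
        derivedLength M = derivedLength N) := by
  obtain ⟨-, ξ, -⟩ := h
  exact ⟨Group.isSolvable_iff_of_commutator_mulEquiv ξ,
    fun _ _ _ _ ↦ derivedLength_eq_of_commutator_mulEquiv ξ⟩
end
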